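/- arXiv:1608.04143 — 7 statements merged into one kernel-verified Lean document; each statement's English description precedes it below -/
import Mathlib

section
/- Suppose the menu (q, t) is incentive compatible in ω, the allocation q is continuous, the type map Θ is continuously differentiable, and C is continuous with a continuous partial derivative C_θ in its second argument. Then the seller's revenue R(ω) := t(ω) − C(q(ω), Θ(ω)) satisfies the revenue-equivalence formula: for all ω, ω′ ∈ [ωl, ωu], R(ω) = R(ω′) − ∫_{ω′}^{ω} C_θ(q(ŝ), Θ(ŝ)) · Θ′(ŝ) dŝ. -/
/-!
Incentive compatibility, tested against the deviations `a → b` and `b → a`, traps `R b - R a`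
between `C (q a) (Θ a) - C (q a) (Θ b)` and `C (q b) (Θ a) - C (q b) (Θ b)`. Joint continuity of
`Cθ` makes `y ↦ C y` differentiable in the type uniformly for `y` near `q a`, so, `q` being
continuous, both bounds are `-Cθ (q a) (Θ a) * (Θ b - Θ a) + o(Θ b - Θ a)`. Hence `R` is
differentiable on `[ωl, ωu]` with the continuous derivative `-Cθ (q ω) (Θ ω) * Θ' ω`, and the
formula is the fundamental theorem of calculus.
-/

open Set MeasureTheory Filter Asymptotics Topology

theorem revenue_sub_bounds_of_incentiveCompatible {C : ℝ → ℝ → ℝ} {Θ q t R : ℝ → ℝ}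
    {s : Set ℝ} (hR : ∀ ω, R ω = t ω - C (q ω) (Θ ω))
    (hIC : ∀ ω ∈ s, ∀ ωh ∈ s, R ω ≥ t ωh - C (q ωh) (Θ ω)) {a b : ℝ} (ha : a ∈ s) (hb : b ∈ s) :
    C (q a) (Θ a) - C (q a) (Θ b) ≤ R b - R a ∧ R b - R a ≤ C (q b) (Θ a) - C (q b) (Θ b) := by
  have hab := hIC b hb a ha
  have hba := hIC a ha b hb
  constructor <;> linarith [hR a, hR b]

theorem isLittleO_sub_sub_mul_of_tendsto {α ι : Type*} [TopologicalSpace α] {l : Filter ι}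
    {C Cθ : α → ℝ → ℝ} {y₀ : α} {θ₀ : ℝ} (hC : ∀ y θ, HasDerivAt (C y) (Cθ y θ) θ)
    (hCθ : ContinuousAt (Function.uncurry Cθ) (y₀, θ₀)) {y : ι → α} {θ : ι → ℝ}
    (hy : Tendsto y l (𝓝 y₀)) (hθ : Tendsto θ l (𝓝 θ₀)) :
    (fun i => C (y i) (θ i) - C (y i) θ₀ - Cθ y₀ θ₀ * (θ i - θ₀)) =o[l] fun i => θ i - θ₀ := by
  refine isLittleO_iff.mpr fun c hc => ?_
  have hnear : ∀ᶠ p in 𝓝 y₀ ×ˢ 𝓝 θ₀, ‖Cθ p.1 p.2 - Cθ y₀ θ₀‖ ≤ c := by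
    rw [← nhds_prod_eq]
    exact hCθ.eventually (Metric.closedBall_mem_nhds _ hc)
  obtain ⟨near, hy_near, δ, hδ, hbound⟩ := Metric.eventually_prod_nhds_iff.mp hnear
  filter_upwards [hy.eventually hy_near, hθ.eventually (Metric.ball_mem_nhds θ₀ hδ)]
    with i hyi hθi
  have hmvt := (convex_ball θ₀ δ).norm_image_sub_le_of_norm_hasDerivWithin_le
    (f := fun u => C (y i) u - Cθ y₀ θ₀ * u)
    (fun u _ => ((hC (y i) u).sub ((hasDerivAt_id u).const_mul _)).hasDerivWithinAt)
    (fun u hu => by simpa using hbound hyi hu) (Metric.mem_ball_self hδ) hθi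
  exact le_of_eq_of_le (by congr 1; ring) hmvt

theorem hasDerivWithinAt_revenue_of_bounds {C Cθ : ℝ → ℝ → ℝ} {Θ q R : ℝ → ℝ} {Θ' : ℝ}
    {s : Set ℝ} {x : ℝ} (hC : ∀ y θ, HasDerivAt (C y) (Cθ y θ) θ)
    (hCθ : ContinuousAt (Function.uncurry Cθ) (q x, Θ x))
    (hΘ : HasDerivWithinAt Θ Θ' s x) (hq : ContinuousWithinAt q s x)
    (hbounds : ∀ b ∈ s, C (q x) (Θ x) - C (q x) (Θ b) ≤ R b - R x ∧
      R b - R x ≤ C (q b) (Θ x) - C (q b) (Θ b)) :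
    HasDerivWithinAt R (-(Cθ (q x) (Θ x) * Θ')) s x := by
  have hΘt : Tendsto Θ (𝓝[s] x) (𝓝 (Θ x)) := hΘ.continuousWithinAt
  have hA := isLittleO_sub_sub_mul_of_tendsto hC hCθ hq hΘt
  have hB := isLittleO_sub_sub_mul_of_tendsto hC hCθ tendsto_const_nhds hΘt
  have hgap : (fun b => R b - R x + Cθ (q x) (Θ x) * (Θ b - Θ x))
      =o[𝓝[s] x] fun b => Θ b - Θ x := by
    refine IsBigO.trans_isLittleO ?_ (hA.norm_left.add hB.norm_left)
    refine IsBigO.of_bound' (eventually_mem_nhdsWithin.mono fun b hb => ?_)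
    obtain ⟨hlo, hhi⟩ := hbounds b hb
    set A := C (q b) (Θ b) - C (q b) (Θ x) - Cθ (q x) (Θ x) * (Θ b - Θ x) with hA_def
    set B := C (q x) (Θ b) - C (q x) (Θ x) - Cθ (q x) (Θ x) * (Θ b - Θ x) with hB_def
    simp only [Real.norm_eq_abs]
    refine (abs_le.mpr ⟨?_, ?_⟩).trans (le_abs_self _) <;>
      linarith [neg_le_abs A, le_abs_self B, abs_nonneg A, abs_nonneg B]
  rw [hasDerivWithinAt_iff_isLittleO]
  refine ((hgap.trans_isBigO hΘ.hasFDerivWithinAt.isBigO_sub).sub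
    ((hasDerivWithinAt_iff_isLittleO.mp hΘ).const_mul_left (Cθ (q x) (Θ x)))).congr_left
    fun b => ?_
  simp only [smul_eq_mul]
  ring

theorem integral_eq_sub_of_hasDerivWithinAt_Icc {E : Type*} [NormedAddCommGroup E]
    [NormedSpace ℝ E] [CompleteSpace E] {f f' : ℝ → E} {a b x y : ℝ}
    (hderiv : ∀ z ∈ Icc a b, HasDerivWithinAt f (f' z) (Icc a b) z)
    (hint : IntervalIntegrable f' volume x y) (hx : x ∈ Icc a b) (hy : y ∈ Icc a b) :
    ∫ z in x..y, f' z = f y - f x := by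
  have hsub : uIcc x y ⊆ Icc a b := uIcc_subset_Icc hx hy
  refine intervalIntegral.integral_eq_sub_of_hasDeriv_right
    (fun z hz => ((hderiv z (hsub hz)).continuousWithinAt).mono hsub) (fun z hz => ?_) hint
  have hz' : z ∈ Ioo a b := Ioo_subset_Ioo (le_min hx.1 hy.1) (max_le hx.2 hy.2) hz
  exact ((hderiv z (Ioo_subset_Icc_self hz')).hasDerivAt
    (Icc_mem_nhds hz'.1 hz'.2)).hasDerivWithinAt

theorem revenue_equivalence_general
    (ωl ωu : ℝ)
    (C Cθ : ℝ → ℝ → ℝ) (Θ Θ' q t : ℝ → ℝ)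
    (hCderiv : ∀ x θ, HasDerivAt (fun s => C x s) (Cθ x θ) θ)
    (hCθcont : Continuous (Function.uncurry Cθ))
    (hΘderiv : ∀ ω ∈ Icc ωl ωu, HasDerivAt Θ (Θ' ω) ω)
    (hΘ'cont : ContinuousOn Θ' (Icc ωl ωu))
    (hqcont : ContinuousOn q (Icc ωl ωu))
    (R : ℝ → ℝ)
    (hR : ∀ ω, R ω = t ω - C (q ω) (Θ ω))
    (hIC : ∀ ω ∈ Icc ωl ωu, ∀ ωh ∈ Icc ωl ωu, R ω ≥ t ωh - C (q ωh) (Θ ω)) :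
    ∀ ω ∈ Icc ωl ωu, ∀ ω' ∈ Icc ωl ωu,
      R ω = R ω' - ∫ s in ω'..ω, Cθ (q s) (Θ s) * Θ' s := by
  intro ω hω ω' hω'
  have hΘcont : ContinuousOn Θ (Icc ωl ωu) := fun z hz =>
    (hΘderiv z hz).continuousAt.continuousWithinAt
  have hRderiv : ∀ z ∈ Icc ωl ωu,
      HasDerivWithinAt R (-(Cθ (q z) (Θ z) * Θ' z)) (Icc ωl ωu) z := fun z hz =>
    hasDerivWithinAt_revenue_of_bounds hCderiv hCθcont.continuousAt
      (hΘderiv z hz).hasDerivWithinAt (hqcont z hz)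
      fun b hb => revenue_sub_bounds_of_incentiveCompatible hR hIC hz hb
  have hRderiv_cont : ContinuousOn (fun s => -(Cθ (q s) (Θ s) * Θ' s)) (Icc ωl ωu) :=
    ((hCθcont.comp_continuousOn (hqcont.prodMk hΘcont)).mul hΘ'cont).neg
  have hFTC := integral_eq_sub_of_hasDerivWithinAt_Icc hRderiv
    ((hRderiv_cont.mono (uIcc_subset_Icc hω' hω)).intervalIntegrable) hω' hω
  rw [intervalIntegral.integral_neg] at hFTC
  linarith

/-- **Revenue equivalence.** If the menu `(q, t)` is incentive compatible in `ω`, the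
allocation `q` is continuous, the type map `Θ` is continuously differentiable, and `C` is
continuous with continuous partial derivative `Cθ` in its second argument, then the seller's
revenue `R ω = t ω - C (q ω) (Θ ω)` satisfies
`R ω = R ω' - ∫ s in ω'..ω, Cθ (q s) (Θ s) * Θ' s` for all `ω, ω' ∈ [ωl, ωu]`. -/
theorem revenue_equivalence
    (ωl ωu : ℝ) (hω : ωl < ωu)
    (C Cθ : ℝ → ℝ → ℝ) (Θ Θ' q t : ℝ → ℝ)
    (hCcont : Continuous (Function.uncurry C))
    (hCderiv : ∀ x θ, HasDerivAt (fun s => C x s) (Cθ x θ) θ)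
    (hCθcont : Continuous (Function.uncurry Cθ))
    (hΘderiv : ∀ ω ∈ Icc ωl ωu, HasDerivAt Θ (Θ' ω) ω)
    (hΘ'cont : ContinuousOn Θ' (Icc ωl ωu))
    (hqcont : ContinuousOn q (Icc ωl ωu))
    (R : ℝ → ℝ)
    (hR : ∀ ω, R ω = t ω - C (q ω) (Θ ω))
    (hIC : ∀ ω ∈ Icc ωl ωu, ∀ ωh ∈ Icc ωl ωu, R ω ≥ t ωh - C (q ωh) (Θ ω)) :
    ∀ ω ∈ Icc ωl ωu, ∀ ω' ∈ Icc ωl ωu,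
      R ω = R ω' - ∫ s in ω'..ω, Cθ (q s) (Θ s) * Θ' s :=
  revenue_equivalence_general ωl ωu C Cθ Θ Θ' q t hCderiv hCθcont hΘderiv hΘ'cont hqcont R hR hIC
end

section
/- Suppose the type map Θ is continuously differentiable and strictly decreasing on [ωl, ωu], C has a continuous partial derivative C_θ in its second argument, for every θ the map q̂ ↦ C_θ(q̂, θ) is nondecreasing, the allocation q is nondecreasing and continuous, and the revenue satisfies R(ω) = R(ω′) − ∫_{ω′}^{ω} C_θ(q(ŝ), Θ(ŝ)) · Θ′(ŝ) dŝ for all ω, ω′ ∈ [ωl, ωu]. Then the menu (q, t) is incentive compatible in ω: R(ω) ≥ t(ω̂) − C(q(ω̂), Θ(ω)) for all ω, ω̂ ∈ [ωl, ωu]. Moreover, if in addition C_θ ≥ 0 everywhere, then R is nondecreasing on [ωl, ωu]. -/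
/-!
Fix a report `ωh` and view the deviation payoff `ω ↦ t ωh - C (q ωh) (Θ ω)` as a function of the
true state. It agrees with `R` at `ωh`, and by the fundamental theorem of calculus its derivative
is `-Cθ (q ωh) (Θ ω) * Θ' ω`, while the revenue-equivalence formula makes the derivative of `R`
equal to `-Cθ (q ω) (Θ ω) * Θ' ω`. Hence the IC surplus is
`∫ s in ωh..ω, (Cθ (q ωh) (Θ s) - Cθ (q s) (Θ s)) * Θ' s`, and its integrand has the sign of
`ω - ωh` because `q` is monotone, `Cθ` is monotone in the quantity and `Θ' ≤ 0`.
-/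

open Set Function

theorem HasDerivAt.nonpos_of_antitoneOn_Icc {f : ℝ → ℝ} {f' a b x : ℝ} (hd : HasDerivAt f f' x)
    (hab : a < b) (hf : AntitoneOn f (Icc a b)) (hx : x ∈ Icc a b) : f' ≤ 0 := by
  rw [← hd.hasDerivWithinAt.derivWithin (uniqueDiffOn_Icc hab x hx)]
  exact hf.derivWithin_nonpos

namespace intervalIntegral

theorem integral_nonneg_of_orientation {f : ℝ → ℝ} {a b : ℝ}
    (hab : a ≤ b → ∀ s ∈ Icc a b, 0 ≤ f s) (hba : b ≤ a → ∀ s ∈ Icc b a, f s ≤ 0) :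
    0 ≤ ∫ s in a..b, f s := by
  rcases le_total a b with h | h
  · exact integral_nonneg h (hab h)
  · rw [integral_symm, ← integral_neg]
    exact integral_nonneg h fun s hs => neg_nonneg.2 (hba h s hs)

end intervalIntegral

open intervalIntegral

section Revenue

variable {C Cθ : ℝ → ℝ → ℝ} {Θ Θ' q t R : ℝ → ℝ} {a b : ℝ}

theorem revenue_sub_deviation_eq_integral
    (hC : ∀ x θ, HasDerivAt (fun s => C x s) (Cθ x θ) θ) (hCθ : Continuous (uncurry Cθ))
    (hΘ : ∀ s ∈ uIcc a b, HasDerivAt Θ (Θ' s) s) (hΘ' : ContinuousOn Θ' (uIcc a b))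
    (hq : ContinuousOn q (uIcc a b)) (hRa : R a = t a - C (q a) (Θ a))
    (hRE : R b = R a - ∫ s in a..b, Cθ (q s) (Θ s) * Θ' s) :
    R b - (t a - C (q a) (Θ b)) = ∫ s in a..b, (Cθ (q a) (Θ s) - Cθ (q s) (Θ s)) * Θ' s := by
  have hΘc : ContinuousOn Θ (uIcc a b) := fun s hs => (hΘ s hs).continuousAt.continuousWithinAt
  have hdev : ∫ s in a..b, Cθ (q a) (Θ s) * Θ' s = C (q a) (Θ b) - C (q a) (Θ a) :=
    integral_deriv_comp_mul_deriv hΘ (fun s _ => hC (q a) (Θ s)) hΘ' (hCθ.uncurry_left (q a))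
  have hint_dev : IntervalIntegrable (fun s => Cθ (q a) (Θ s) * Θ' s) MeasureTheory.volume a b :=
    (((hCθ.uncurry_left (q a)).comp_continuousOn hΘc).mul hΘ').intervalIntegrable
  have hint : IntervalIntegrable (fun s => Cθ (q s) (Θ s) * Θ' s) MeasureTheory.volume a b :=
    ((hCθ.comp_continuousOn (hq.prodMk hΘc)).mul hΘ').intervalIntegrable
  simp only [sub_mul]
  rw [integral_sub hint_dev hint, hdev]
  linarith

theorem integral_surplus_nonneg (hCθ : ∀ θ, Monotone fun x => Cθ x θ)
    (hq : MonotoneOn q (uIcc a b)) (hΘ' : ∀ s ∈ uIcc a b, Θ' s ≤ 0) :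
    0 ≤ ∫ s in a..b, (Cθ (q a) (Θ s) - Cθ (q s) (Θ s)) * Θ' s := by
  refine integral_nonneg_of_orientation (fun _ s hs => ?_) (fun _ s hs => ?_)
  · have hs' : s ∈ uIcc a b := Icc_subset_uIcc hs
    exact mul_nonneg_of_nonpos_of_nonpos
      (sub_nonpos.2 (hCθ _ (hq left_mem_uIcc hs' hs.1))) (hΘ' s hs')
  · have hs' : s ∈ uIcc a b := Icc_subset_uIcc' hs
    exact mul_nonpos_of_nonneg_of_nonpos
      (sub_nonneg.2 (hCθ _ (hq hs' left_mem_uIcc hs.2))) (hΘ' s hs')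

end Revenue

/-- **Converse of revenue equivalence.** If the type map `Θ` is continuously differentiable
and strictly decreasing on `[ωl, ωu]`, `C` has a continuous partial derivative `Cθ` in its
second argument, `x ↦ Cθ x θ` is nondecreasing for every `θ`, the allocation `q` is
nondecreasing and continuous, and the revenue satisfies the revenue-equivalence formula, then
the menu `(q, t)` is incentive compatible in `ω`. Moreover, if in addition `Cθ ≥ 0`
everywhere, then `R` is nondecreasing on `[ωl, ωu]`. -/
theorem IC_of_revenue_equivalence
    (ωl ωu : ℝ) (hω : ωl < ωu)
    (C Cθ : ℝ → ℝ → ℝ) (Θ Θ' q t : ℝ → ℝ)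
    (hCderiv : ∀ x θ, HasDerivAt (fun s => C x s) (Cθ x θ) θ)
    (hCθcont : Continuous (Function.uncurry Cθ))
    (hΘderiv : ∀ ω ∈ Icc ωl ωu, HasDerivAt Θ (Θ' ω) ω)
    (hΘ'cont : ContinuousOn Θ' (Icc ωl ωu))
    (hΘanti : StrictAntiOn Θ (Icc ωl ωu))
    (hCθmono : ∀ θ, Monotone (fun x => Cθ x θ))
    (hqmono : MonotoneOn q (Icc ωl ωu))
    (hqcont : ContinuousOn q (Icc ωl ωu))
    (R : ℝ → ℝ)
    (hR : ∀ ω, R ω = t ω - C (q ω) (Θ ω))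
    (hRE : ∀ ω ∈ Icc ωl ωu, ∀ ω' ∈ Icc ωl ωu,
      R ω = R ω' - ∫ s in ω'..ω, Cθ (q s) (Θ s) * Θ' s) :
    (∀ ω ∈ Icc ωl ωu, ∀ ωh ∈ Icc ωl ωu, R ω ≥ t ωh - C (q ωh) (Θ ω)) ∧
    ((∀ x θ, 0 ≤ Cθ x θ) → MonotoneOn R (Icc ωl ωu)) := by
  have hΘ'nonpos : ∀ s ∈ Icc ωl ωu, Θ' s ≤ 0 := fun s hs =>
    (hΘderiv s hs).nonpos_of_antitoneOn_Icc hω hΘanti.antitoneOn hs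
  refine ⟨fun ω hωI ωh hωhI => ?_, fun hCθnonneg ω₁ hω₁ ω₂ hω₂ hle => ?_⟩
  · have hsub := uIcc_subset_Icc hωhI hωI
    have hsurplus := revenue_sub_deviation_eq_integral hCderiv hCθcont
      (fun s hs => hΘderiv s (hsub hs)) (hΘ'cont.mono hsub) (hqcont.mono hsub) (hR ωh)
      (hRE ω hωI ωh hωhI)
    have hnonneg := integral_surplus_nonneg (Θ := Θ) hCθmono (hqmono.mono hsub)
      fun s hs => hΘ'nonpos s (hsub hs)
    linarith
  · have hmono : 0 ≤ ∫ s in ω₁..ω₂, -(Cθ (q s) (Θ s) * Θ' s) :=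
      integral_nonneg hle fun s hs => neg_nonneg.2 <| mul_nonpos_of_nonneg_of_nonpos
        (hCθnonneg _ _) (hΘ'nonpos s ⟨hω₁.1.trans hs.1, hs.2.trans hω₂.2⟩)
    rw [integral_neg] at hmono
    linarith [hRE ω₂ hω₂ ω₁ hω₁]
end

section
/- Let q : [ωl, ωu] → ℝ be nondecreasing, let Θ : [ωl, ωu] → ℝ be differentiable with Θ′(ω) < 0 for all ω, let σ* : [ωl, ωu] → [ωl, ωu] be measurable with σ*(ω) ≥ ω for all ω, and suppose q̂ ↦ C_θ(q̂, θ) is nondecreasing for every θ, with the inner and outer integrals well-defined. Then the incentive payment R^W := ∫ ( ∫_{ω}^{σ*(ω)} [C_θ(q(ω), Θ(ŝ)) − C_θ(q(ŝ), Θ(ŝ))] · Θ′(ŝ) dŝ ) dG(ω) is nonnegative. -/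
open Set MeasureTheory

/-- **Nonnegativity of the coordinated-misreport incentive payment `R^W`.** -/
theorem RW_nonneg
    (ωl ωu : ℝ) (hω : ωl < ωu)
    (G : Measure ℝ) [IsProbabilityMeasure G]
    (hGsupp : ∀ᵐ ω ∂G, ω ∈ Icc ωl ωu)
    (C Cθ : ℝ → ℝ → ℝ) (Θ Θ' q σ : ℝ → ℝ)
    (hqmono : MonotoneOn q (Icc ωl ωu))
    (hΘderiv : ∀ ω ∈ Icc ωl ωu, HasDerivAt Θ (Θ' ω) ω)
    (hΘ'neg : ∀ ω ∈ Icc ωl ωu, Θ' ω < 0)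
    (hσmeas : Measurable σ)
    (hσmap : ∀ ω ∈ Icc ωl ωu, σ ω ∈ Icc ωl ωu)
    (hσge : ∀ ω ∈ Icc ωl ωu, ω ≤ σ ω)
    (hCθmono : ∀ θ, Monotone (fun x => Cθ x θ))
    (hinner : ∀ ω ∈ Icc ωl ωu,
      IntervalIntegrable (fun s => (Cθ (q ω) (Θ s) - Cθ (q s) (Θ s)) * Θ' s)
        volume ω (σ ω))
    (houter : Integrable
      (fun ω => ∫ s in ω..σ ω, (Cθ (q ω) (Θ s) - Cθ (q s) (Θ s)) * Θ' s) G) :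
    0 ≤ ∫ ω, (∫ s in ω..σ ω, (Cθ (q ω) (Θ s) - Cθ (q s) (Θ s)) * Θ' s) ∂G := by
  refine integral_nonneg_of_ae ?_
  filter_upwards [hGsupp] with ω hωmem
  refine intervalIntegral.integral_nonneg (hσge ω hωmem) ?_
  intro s hs
  have hsmem : s ∈ Icc ωl ωu :=
    ⟨le_trans hωmem.1 hs.1, le_trans hs.2 (hσmap ω hωmem).2⟩
  have hq : q ω ≤ q s := hqmono hωmem hsmem hs.1
  have h1 : Cθ (q ω) (Θ s) - Cθ (q s) (Θ s) ≤ 0 :=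
    sub_nonpos.mpr (hCθmono (Θ s) hq)

  nlinarith [h1, hΘ'neg s hsmem]
end

section
/- Let q : [θl, θu] → ℝ be nonincreasing, suppose C has a continuous partial derivative C_θ in its second argument with C_θ(q̂, θ) nondecreasing in q̂ for every θ, and let R : [θl, θu] → ℝ satisfy R(θ) = R(θu) + ∫_{θ}^{θu} C_θ(q(s), s) ds; define the payment by t(θ) := R(θ) + C(q(θ), θ). Then the incentive-compatibility constraints hold: R(θ) ≥ t(θ̂) − C(q(θ̂), θ) for all θ, θ̂ ∈ [θl, θu]. Moreover, if C_θ ≥ 0 everywhere and R(θu) ≥ 0, then R(θ) ≥ 0 for all θ, so individual rationality also holds. -/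
open Set

/-- **Sufficiency in the type-screening problem.** If `q` is nonincreasing, `Cθ` is a
continuous partial derivative of `C` in `θ` that is nondecreasing in the quantity, the
revenue satisfies `R θ = R θu + ∫ s in θ..θu, Cθ (q s) s`, and the payment is
`t θ = R θ + C (q θ) θ`, then the IC constraints hold; moreover if `Cθ ≥ 0` and
`R θu ≥ 0`, then `R ≥ 0` on `[θl, θu]` (individual rationality). -/
theorem screening_sufficiency
    (θl θu : ℝ) (hθ : θl < θu)
    (C Cθ : ℝ → ℝ → ℝ)
    (hCderiv : ∀ x θ, HasDerivAt (fun s => C x s) (Cθ x θ) θ)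
    (hCθcont : Continuous (Function.uncurry Cθ))
    (hCθmono : ∀ θ, Monotone (fun x => Cθ x θ))
    (q : ℝ → ℝ) (hqanti : AntitoneOn q (Icc θl θu))
    (R t : ℝ → ℝ)
    (hRform : ∀ θ ∈ Icc θl θu, R θ = R θu + ∫ s in θ..θu, Cθ (q s) s)
    (ht : ∀ θ, t θ = R θ + C (q θ) θ) :
    (∀ θ ∈ Icc θl θu, ∀ θh ∈ Icc θl θu, R θ ≥ t θh - C (q θh) θ) ∧
    ((∀ x θ, 0 ≤ Cθ x θ) → 0 ≤ R θu → ∀ θ ∈ Icc θl θu, 0 ≤ R θ) := by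
  set f : ℝ → ℝ := fun s => Cθ (q s) s with hf
  -- integrability of f on Icc θl θu
  have hqmeas : AEMeasurable q (MeasureTheory.volume.restrict (Icc θl θu)) :=
    aemeasurable_restrict_of_antitoneOn measurableSet_Icc hqanti
  have hfmeas : AEMeasurable f (MeasureTheory.volume.restrict (Icc θl θu)) := by
    have : AEMeasurable (fun s => (q s, s)) (MeasureTheory.volume.restrict (Icc θl θu)) :=
      hqmeas.prodMk aemeasurable_id
    exact hCθcont.measurable.comp_aemeasurable this
  have hK : IsCompact ((Icc (q θu) (q θl)) ×ˢ (Icc θl θu)) :=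
    isCompact_Icc.prod isCompact_Icc
  obtain ⟨M, hM⟩ := hK.exists_bound_of_continuousOn hCθcont.continuousOn
  have hlmem : θl ∈ Icc θl θu := ⟨le_refl _, hθ.le⟩
  have humem : θu ∈ Icc θl θu := ⟨hθ.le, le_refl _⟩
  have hfint : MeasureTheory.IntegrableOn f (Icc θl θu) := by
    refine MeasureTheory.Integrable.mono' (MeasureTheory.integrable_const M)
      hfmeas.aestronglyMeasurable ?_
    filter_upwards [MeasureTheory.ae_restrict_mem measurableSet_Icc] with s hs
    exact hM (q s, s) ⟨⟨hqanti hs humem hs.2, hqanti hlmem hs hs.1⟩, hs⟩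
  have hint : ∀ a ∈ Icc θl θu, ∀ b ∈ Icc θl θu,
      IntervalIntegrable f MeasureTheory.volume a b := by
    intro a ha b hb
    exact (hfint.mono_set (uIcc_subset_Icc ha hb)).intervalIntegrable
  have hCcont : ∀ x : ℝ, Continuous (fun s => Cθ x s) := by
    intro x
    exact hCθcont.comp (continuous_const.prodMk continuous_id)
  -- FTC
  have hftc : ∀ (x a b : ℝ), C x b - C x a = ∫ s in a..b, Cθ x s := by
    intro x a b
    exact (intervalIntegral.integral_eq_sub_of_hasDerivAt
      (fun s _ => hCderiv x s) ((hCcont x).intervalIntegrable a b)).symm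
  constructor
  · intro θ hθm θh hθhm
    have key : R θ = R θh + ∫ s in θ..θh, f s := by
      have hadj := intervalIntegral.integral_add_adjacent_intervals
        (hint θ hθm θh hθhm) (hint θh hθhm θu humem)
      have h1 := hRform θ hθm
      have h2 := hRform θh hθhm
      rw [h1, h2]
      linarith
    have hmono : (∫ s in θ..θh, Cθ (q θh) s) ≤ ∫ s in θ..θh, f s := by
      rcases le_total θ θh with hle | hle
      · refine intervalIntegral.integral_mono_on hle
          ((hCcont (q θh)).intervalIntegrable θ θh) (hint θ hθm θh hθhm) ?_
        intro s hs
        have hsmem : s ∈ Icc θl θu := ⟨hθm.1.trans hs.1, hs.2.trans hθhm.2⟩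
        exact hCθmono s (hqanti hsmem hθhm hs.2)
      · have e1 : (∫ s in θ..θh, Cθ (q θh) s) = -∫ s in θh..θ, Cθ (q θh) s :=
          intervalIntegral.integral_symm θh θ
        have e2 : (∫ s in θ..θh, f s) = -∫ s in θh..θ, f s :=
          intervalIntegral.integral_symm θh θ
        have : (∫ s in θh..θ, f s) ≤ ∫ s in θh..θ, Cθ (q θh) s := by
          refine intervalIntegral.integral_mono_on hle
            (hint θh hθhm θ hθm) ((hCcont (q θh)).intervalIntegrable θh θ) ?_
          intro s hs
          have hsmem : s ∈ Icc θl θu := ⟨hθhm.1.trans hs.1, hs.2.trans hθm.2⟩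
          exact hCθmono s (hqanti hθhm hsmem hs.1)
        linarith
    have hC : C (q θh) θh - C (q θh) θ = ∫ s in θ..θh, Cθ (q θh) s := hftc (q θh) θ θh
    rw [ht θh]
    linarith
  · intro hCθnn hRu θ hθm
    rw [hRform θ hθm]
    have : 0 ≤ ∫ s in θ..θu, f s :=
      intervalIntegral.integral_nonneg hθm.2 (fun s _ => hCθnn (q s) s)
    linarith
end

section
/- Let G be a probability measure on [ωl, ωu], let C : ℝ × ℝ → ℝ satisfy: q̂ ↦ C(q̂, θ) − C(q̂, θ′) is nondecreasing whenever θ ≥ θ′, and θ ↦ C(q̂, θ) is nondecreasing for every q̂. Let Θ₁, …, Θ_M : [ωl, ωu] → ℝ satisfy Θ_{k+1}(ω) ≤ Θ_k(ω) for all k and ω, let q₁ ≤ q₂ ≤ … ≤ q_M be real numbers, and assume all functions ω ↦ C(q_k, Θ_m(ω)) are G-integrable. Define R₁ := 0, R_i := Σ_{k=1}^{i−1} ∫ [C(q_k, Θ_k(ω)) − C(q_k, Θ_{k+1}(ω))] dG(ω) for i ≥ 2, and payments t_i := R_i + ∫ C(q_i, Θ_i(ω)) dG(ω). Then the resulting forward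 mechanism is globally incentive compatible and individually rational: for all i, j, R_i ≥ t_j − ∫ C(q_j, Θ_i(ω)) dG(ω), and R_i ≥ 0. -/
open Set MeasureTheory

/-- **Global IC and IR of the optimal forward mechanism.** With technologies `1, …, M`
ordered so that `Θ (k+1) ≤ Θ k` pointwise, nondecreasing quantities `q 1 ≤ … ≤ q M`,
revenues `R i = ∑_{k=1}^{i-1} ∫ (C (q k) (Θ k ω) - C (q k) (Θ (k+1) ω)) dG` (so `R 1 = 0`),
and payments `t i = R i + ∫ C (q i) (Θ i ω) dG`, the forward mechanism is globally incentive
compatible and individually rational. -/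
theorem forward_mechanism_IC_IR
    (ωl ωu : ℝ) (hω : ωl < ωu) (M : ℕ)
    (G : Measure ℝ) [IsProbabilityMeasure G]
    (hGsupp : ∀ᵐ ω ∂G, ω ∈ Icc ωl ωu)
    (C : ℝ → ℝ → ℝ)
    (hCdiff : ∀ θ θ', θ' ≤ θ → Monotone (fun x => C x θ - C x θ'))
    (hCmono : ∀ x, Monotone (fun θ => C x θ))
    (Θ : ℕ → ℝ → ℝ)
    (hΘ : ∀ k, 1 ≤ k → k < M → ∀ ω, Θ (k + 1) ω ≤ Θ k ω)
    (q : ℕ → ℝ)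
    (hq : ∀ k, 1 ≤ k → k < M → q k ≤ q (k + 1))
    (hint : ∀ k, 1 ≤ k → k ≤ M → ∀ m, 1 ≤ m → m ≤ M →
      Integrable (fun ω => C (q k) (Θ m ω)) G)
    (R t : ℕ → ℝ)
    (hR : ∀ i, R i = ∑ k ∈ Finset.Ico 1 i,
      ∫ ω, (C (q k) (Θ k ω) - C (q k) (Θ (k + 1) ω)) ∂G)
    (ht : ∀ i, t i = R i + ∫ ω, C (q i) (Θ i ω) ∂G) :
    ∀ i, 1 ≤ i → i ≤ M → ∀ j, 1 ≤ j → j ≤ M →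
      (R i ≥ t j - ∫ ω, C (q j) (Θ i ω) ∂G) ∧ 0 ≤ R i := by
  intro i hi1 hiM j hj1 hjM
  -- q is monotone on [1, M]
  have qmono : ∀ a, 1 ≤ a → ∀ b, a ≤ b → b ≤ M → q a ≤ q b := by
    intro a ha b hab
    induction b, hab using Nat.le_induction with
    | base => intro _; exact le_refl _
    | succ n hn ih =>
      intro hnM
      exact le_trans (ih (by omega)) (hq n (by omega) (by omega))
  set F : ℕ → ℕ → ℝ := fun k m => ∫ ω, C (q k) (Θ m ω) ∂G with hF
  have tele : ∀ (g : ℕ → ℝ) (a b : ℕ), a ≤ b →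
      ∑ k ∈ Finset.Ico a b, (g k - g (k + 1)) = g a - g b := by
    intro g a b hab
    induction b, hab using Nat.le_induction with
    | base => simp
    | succ n hn ih => rw [Finset.sum_Ico_succ_top hn, ih]; ring
  have hRsum : ∀ i', i' ≤ M → R i' = ∑ k ∈ Finset.Ico 1 i', (F k k - F k (k + 1)) := by
    intro i' hi'
    rw [hR]
    refine Finset.sum_congr rfl ?_
    intro k hk
    simp only [Finset.mem_Ico] at hk
    exact integral_sub (hint k hk.1 (by omega) k hk.1 (by omega))
      (hint k hk.1 (by omega) (k + 1) (by omega) (by omega))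
  -- IR
  have hIR : 0 ≤ R i := by
    rw [hR]
    refine Finset.sum_nonneg ?_
    intro k hk
    simp only [Finset.mem_Ico] at hk
    refine integral_nonneg ?_
    intro ω
    have := hCmono (q k) (hΘ k hk.1 (by omega) ω)
    simp only [Pi.zero_apply, sub_nonneg]
    exact this
  refine ⟨?_, hIR⟩
  -- IC
  rw [ht, hRsum i hiM, hRsum j hjM]
  have key : ∀ k, 1 ≤ k → k < M → ∀ a b, 1 ≤ a → a ≤ M → 1 ≤ b → q a ≤ q b → b ≤ M →
      F a k - F a (k + 1) ≤ F b k - F b (k + 1) := by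
    intro k hk1 hkM a b ha1 haM hb1 hab hbM
    have h1 : (F a k - F a (k + 1)) = ∫ ω, (C (q a) (Θ k ω) - C (q a) (Θ (k + 1) ω)) ∂G :=
      (integral_sub (hint a ha1 haM k hk1 (by omega)) (hint a ha1 haM (k+1) (by omega) (by omega))).symm
    have h2 : (F b k - F b (k + 1)) = ∫ ω, (C (q b) (Θ k ω) - C (q b) (Θ (k + 1) ω)) ∂G :=
      (integral_sub (hint b hb1 hbM k hk1 (by omega)) (hint b hb1 hbM (k+1) (by omega) (by omega))).symm
    rw [h1, h2]
    refine integral_mono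
      ((hint a ha1 haM k hk1 (by omega)).sub (hint a ha1 haM (k+1) (by omega) (by omega)))
      ((hint b hb1 hbM k hk1 (by omega)).sub (hint b hb1 hbM (k+1) (by omega) (by omega))) ?_
    intro ω
    exact hCdiff (Θ k ω) (Θ (k + 1) ω) (hΘ k hk1 hkM ω) hab
  rcases le_or_gt j i with hji | hij
  · have hsplit := Finset.sum_Ico_consecutive (fun k => F k k - F k (k + 1)) hj1 hji
    have htel := tele (fun m => F j m) j i hji
    have hterm : ∑ k ∈ Finset.Ico j i, (F j k - F j (k + 1)) ≤
        ∑ k ∈ Finset.Ico j i, (F k k - F k (k + 1)) := by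
      refine Finset.sum_le_sum ?_
      intro k hk
      simp only [Finset.mem_Ico] at hk
      exact key k (by omega) (by omega) j k hj1 hjM (by omega)
        (qmono j hj1 k hk.1 (by omega)) (by omega)
    linarith
  · have hsplit := Finset.sum_Ico_consecutive (fun k => F k k - F k (k + 1)) hi1 (le_of_lt hij)
    have htel := tele (fun m => F j m) i j (le_of_lt hij)
    have hterm : ∑ k ∈ Finset.Ico i j, (F k k - F k (k + 1)) ≤
        ∑ k ∈ Finset.Ico i j, (F j k - F j (k + 1)) := by
      refine Finset.sum_le_sum ?_
      intro k hk
      simp only [Finset.mem_Ico] at hk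
      exact key k (by omega) (by omega) k j (by omega) (by omega) hj1
        (qmono k (by omega) j (le_of_lt hk.2) hjM) hjM
    linarith
end

section
/- Given menus (q_i, t_i), i = 1, …, M, with expected revenues R_i := ∫ (t_i(ω) − C(q_i(ω), Θ_i(ω))) dG(ω) and all relevant functions G-integrable, define the modified payment t̂_i(ω) := ∫ t_i dG + C(q_i(ω), Θ_i(ω)) − ∫ C(q_i(ω′), Θ_i(ω′)) dG(ω′). Then: (i) ∫ t̂_i dG = ∫ t_i dG for every i; (ii) t̂_i(ω) − C(q_i(ω), Θ_i(ω)) = R_i for every ω, so if R_i ≥ 0 the modified mechanism satisfies ex-post individual rationality (no penalty risk for any wind realization); and (iii) ∫ [t̂_j(ω) − C(q_j(ω), Θ_i(ω))] dG(ω) = ∫ [t_j(ω) − C(q_j(ω), Θ_i(ω))] dG(ω) for all i, j, so the monitoring incentive-compatibility constraints, the seller's expected revenue, the buyer's expected utility, and the designer's objective are all unchanged. -/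
open MeasureTheory

/-!
The modified payment reimburses the realized cost and charges its mean, so the seller's ex-post
revenue is the constant `∫ t_i - ∫ C_i = R_i`. Under a probability measure the recentred cost
`C_i - ∫ C_i` has mean zero, hence `∫ t̂_i = ∫ t_i`; every monitoring constraint is affine in the
payment and therefore sees only `∫ t̂_j`, which is unchanged.
-/

section NoPenaltyPayment

variable {α : Type*} [MeasurableSpace α] {μ : Measure α} {t c : α → ℝ}

/-- The paper's modified payment `t̂_i`, for `t = t_i` and `c = C(q_i, Θ_i)`. -/
noncomputable def noPenaltyPayment (μ : Measure α) (t c : α → ℝ) (ω : α) : ℝ :=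
  (∫ ω', t ω' ∂μ) + c ω - ∫ ω', c ω' ∂μ

theorem integrable_noPenaltyPayment [IsFiniteMeasure μ] (hc : Integrable c μ) :
    Integrable (noPenaltyPayment μ t c) μ :=
  ((integrable_const _).add hc).sub (integrable_const _)

theorem integral_noPenaltyPayment [IsProbabilityMeasure μ] (hc : Integrable c μ) :
    ∫ ω, noPenaltyPayment μ t c ω ∂μ = ∫ ω, t ω ∂μ := by
  have hc_add : Integrable (fun ω => (∫ ω', t ω' ∂μ) + c ω) μ := (integrable_const _).add hc
  simp only [noPenaltyPayment]
  rw [integral_sub hc_add (integrable_const _), integral_add (integrable_const _) hc,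
    integral_const, integral_const, probReal_univ, one_smul, one_smul, add_sub_cancel_right]

theorem noPenaltyPayment_sub_eq_integral_sub (ht : Integrable t μ) (hc : Integrable c μ)
    (ω : α) : noPenaltyPayment μ t c ω - c ω = ∫ ω', (t ω' - c ω') ∂μ := by
  rw [noPenaltyPayment, integral_sub ht hc]
  ring

end NoPenaltyPayment

theorem no_penalty_modification_general
    (M : ℕ)
    (G : Measure ℝ) [IsProbabilityMeasure G]
    (C : ℝ → ℝ → ℝ) (Θ q t : Fin M → ℝ → ℝ)
    (htint : ∀ i, Integrable (fun ω => t i ω) G)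
    (hCint : ∀ i j, Integrable (fun ω => C (q j ω) (Θ i ω)) G)
    (R : Fin M → ℝ)
    (hR : ∀ i, R i = ∫ ω, (t i ω - C (q i ω) (Θ i ω)) ∂G)
    (that : Fin M → ℝ → ℝ)
    (hthat : ∀ i ω, that i ω = (∫ ω', t i ω' ∂G) + C (q i ω) (Θ i ω)
        - ∫ ω', C (q i ω') (Θ i ω') ∂G) :
    (∀ i, (∫ ω, that i ω ∂G) = ∫ ω, t i ω ∂G) ∧
    (∀ i ω, that i ω - C (q i ω) (Θ i ω) = R i) ∧
    (∀ i, 0 ≤ R i → ∀ ω, 0 ≤ that i ω - C (q i ω) (Θ i ω)) ∧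
    (∀ i j, (∫ ω, (that j ω - C (q j ω) (Θ i ω)) ∂G)
        = ∫ ω, (t j ω - C (q j ω) (Θ i ω)) ∂G) := by
  have hthat_eq : ∀ i, that i = noPenaltyPayment G (t i) fun ω => C (q i ω) (Θ i ω) :=
    fun i => funext (hthat i)
  have expected_payment : ∀ i, ∫ ω, that i ω ∂G = ∫ ω, t i ω ∂G := fun i => by
    rw [hthat_eq, integral_noPenaltyPayment (hCint i i)]
  have ex_post_revenue : ∀ i ω, that i ω - C (q i ω) (Θ i ω) = R i := fun i ω => by
    rw [hthat_eq, noPenaltyPayment_sub_eq_integral_sub (htint i) (hCint i i), hR]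
  refine ⟨expected_payment, ex_post_revenue, fun i hRi ω => ex_post_revenue i ω ▸ hRi,
    fun i j => ?_⟩
  have hthat_int : Integrable (that j) G := hthat_eq j ▸ integrable_noPenaltyPayment (hCint j j)
  rw [integral_sub hthat_int (hCint i j), integral_sub (htint j) (hCint i j), expected_payment]

/-- **No-penalty modification under wind monitoring.** Given menus `(q i, t i)` with
expected revenues `R i`, the modified payment
`t̂ i ω = ∫ t i dG + C (q i ω) (Θ i ω) - ∫ С (q i ω') (Θ i ω') dG(ω')` satisfies:
(i) the same expected payment; (ii) ex-post revenue constantly equal to `R i` (hence ex-post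
IR whenever `R i ≥ 0`); and (iii) unchanged monitoring IC constraints, seller's expected
revenue, buyer's expected utility and designer's objective. -/
theorem no_penalty_modification
    (ωl ωu : ℝ) (hω : ωl < ωu) (M : ℕ)
    (G : Measure ℝ) [IsProbabilityMeasure G]
    (C : ℝ → ℝ → ℝ) (Θ q t : Fin M → ℝ → ℝ)
    (htint : ∀ i, Integrable (fun ω => t i ω) G)
    (hCint : ∀ i j, Integrable (fun ω => C (q j ω) (Θ i ω)) G)
    (R : Fin M → ℝ)
    (hR : ∀ i, R i = ∫ ω, (t i ω - C (q i ω) (Θ i ω)) ∂G)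
    (that : Fin M → ℝ → ℝ)
    (hthat : ∀ i ω, that i ω = (∫ ω', t i ω' ∂G) + C (q i ω) (Θ i ω)
        - ∫ ω', C (q i ω') (Θ i ω') ∂G) :
    (∀ i, (∫ ω, that i ω ∂G) = ∫ ω, t i ω ∂G) ∧
    (∀ i ω, that i ω - C (q i ω) (Θ i ω) = R i) ∧
    (∀ i, 0 ≤ R i → ∀ ω, 0 ≤ that i ω - C (q i ω) (Θ i ω)) ∧
    (∀ i j, (∫ ω, (that j ω - C (q j ω) (Θ i ω)) ∂G)
        = ∫ ω, (t j ω - C (q j ω) (Θ i ω)) ∂G) :=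
  no_penalty_modification_general M G C Θ q t htint hCint R hR that hthat
end

section
/- Let t̄, q̄, λ ∈ ℝ with λ ≥ 0 and q̄ ≥ 0, let Θ : [ωl, ωu] → ℝ be a type map, and let e : [ωl, ωu] → ℝ satisfy, for every ω, e(ω) ∈ [0, q̄] and t̄ − C(e(ω), Θ(ω)) − λ(q̄ − e(ω)) ≥ t̄ − C(ê, Θ(ω)) − λ(q̄ − ê) for all ê ∈ [0, q̄] (i.e., e(ω) is the seller's optimal real-time generation under the forward contract with commitment q̄, payment t̄ and penalty rate λ). Define the induced menu q̃(ω) := e(ω) and t̃(ω) := t̄ − λ(q̄ − e(ω)). Then the induced menu is incentive compatible in ω: t̃(ω) − C(q̃(ω), Θ(ω)) ≥ t̃(ω̂) − C(q̃(ω̂), Θ(ω)) for all ω, ω̂ ∈ [ωl, ωu]. -/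
open Set

/-- **A forward contract with penalty rate induces an incentive-compatible menu.** If
`e ω ∈ [0, q̄]` is the seller's optimal real-time generation under the forward contract with
commitment `q̄`, payment `t̄` and penalty rate `λ ≥ 0`, then the induced menu
`q̃ ω = e ω`, `t̃ ω = t̄ - λ (q̄ - e ω)` is incentive compatible in `ω`. -/
theorem forward_penalty_induces_IC
    (ωl ωu : ℝ) (hω : ωl < ωu)
    (C : ℝ → ℝ → ℝ) (Θ : ℝ → ℝ)
    (tbar qbar lam : ℝ) (hlam : 0 ≤ lam) (hqbar : 0 ≤ qbar)
    (e : ℝ → ℝ)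
    (hecon : ∀ ω ∈ Icc ωl ωu, e ω ∈ Icc (0 : ℝ) qbar)
    (heopt : ∀ ω ∈ Icc ωl ωu, ∀ x ∈ Icc (0 : ℝ) qbar,
      tbar - C x (Θ ω) - lam * (qbar - x)
        ≤ tbar - C (e ω) (Θ ω) - lam * (qbar - e ω))
    (qtilde ttilde : ℝ → ℝ)
    (hqtilde : ∀ ω, qtilde ω = e ω)
    (httilde : ∀ ω, ttilde ω = tbar - lam * (qbar - e ω)) :
    ∀ ω ∈ Icc ωl ωu, ∀ ωh ∈ Icc ωl ωu,
      ttilde ωh - C (qtilde ωh) (Θ ω) ≤ ttilde ω - C (qtilde ω) (Θ ω) := by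
  intro ω hωm ωh hωhm
  have h := heopt ω hωm (e ωh) (hecon ωh hωhm)
  simp only [hqtilde, httilde]
  linarith
end
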